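/- Fix c with 0 < c < 1, and suppose that for every group a ∈ G the conditional law of p(X) given g(X) = a has positive density on [0,1]. Let d be a decision rule and suppose there exists a group a* ∈ G such that d does not agree almost surely on the event {g(X) = a*} with the threshold rule 1{p(X) ≥ t} for the unique t with μ(p(X) ≥ t | g(X) = a*) = E[d(X) | g(X) = a*]. Then there exists a decision rule d' such that E[d'(X)·(1 − p(X))·1{g(X) = b}] = E[d(X)·(1 − p(X))·1{g(X) = b}] for every b ∈ G (d' has the same false positive rate as d within every group) and u(d',c) > u(d,c). -/

import Mathlib

open MeasureTheory ProbabilityTheory Set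

noncomputable section

/-- A probability law on ℝ has positive density on `[0,1]`. -/
def PosDensity01 (ν : Measure ℝ) : Prop :=
  ∃ φ : ℝ → ENNReal,
    ν = volume.withDensity φ ∧
    (∀ᵐ x ∂(volume.restrict (Icc (0:ℝ) 1)), 0 < φ x) ∧
    (∀ᵐ x ∂(volume : Measure ℝ), x ∉ Icc (0:ℝ) 1 → φ x = 0)

/-!
Fix a group `a` on which `d` is not a.s. a threshold rule. Given `g(X) = a`, `p(X)` has no atoms,
so the false positive mass `s ↦ E[1{p(X) ≥ s} (1 - p(X)); g(X) = a]` is continuous, and by the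
intermediate value theorem some threshold `s` matches the false positive mass of `d` on the group.
Replacing `d` by `1{p ≥ s}` on the group keeps every group-wise false positive mass and changes the
utility by `E[h (p(X) - c); g(X) = a]`, where `h = 1{p(X) ≥ s} - d(X)`. Matching false positives
means `E[h; g(X) = a] = E[h p(X); g(X) = a]`, so the change is `(1 - c) E[h; g(X) = a]`, while
`(1 - s) E[h; g(X) = a] = E[h (p(X) - s); g(X) = a]`; the last integrand is nonnegative and vanishes
a.s. only if `d` is the threshold rule on the group. Hence the change is positive.
-/

lemma norm_le_one_of_mem_Icc {x : ℝ} (hx : x ∈ Icc (0 : ℝ) 1) : ‖x‖ ≤ 1 := by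
  rw [Real.norm_of_nonneg hx.1]; exact hx.2

lemma piecewise_apply_mem {α β : Type*} (S : Set α) [∀ x, Decidable (x ∈ S)] {f g : α → β}
    {T : Set β} (hf : ∀ x, f x ∈ T) (hg : ∀ x, g x ∈ T) (x : α) : S.piecewise f g x ∈ T :=
  S.piecewise_mem_pi (t := univ) (fun x _ => hf x) (fun x _ => hg x) x trivial

def thresholdRule {α : Type*} (q : α → ℝ) (s : ℝ) (x : α) : ℝ := if s ≤ q x then 1 else 0

section ThresholdRule

variable {α : Type*} {q : α → ℝ} {s : ℝ}

lemma thresholdRule_mem_Icc (x : α) : thresholdRule q s x ∈ Icc (0 : ℝ) 1 := by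
  unfold thresholdRule; split_ifs <;> simp

lemma measurable_thresholdRule [MeasurableSpace α] (hq : Measurable q) (s : ℝ) :
    Measurable (thresholdRule q s) :=
  Measurable.ite (measurableSet_le measurable_const hq) measurable_const measurable_const

lemma continuousAt_thresholdRule {x : α} (hx : q x ≠ s) :
    ContinuousAt (fun t => thresholdRule q t x) s := by
  rcases hx.lt_or_gt with hlt | hgt
  · refine continuousAt_const.congr (f := fun _ => (0 : ℝ)) ?_
    filter_upwards [Ioi_mem_nhds hlt] with t ht
    exact (if_neg (not_le.2 ht)).symm
  · refine continuousAt_const.congr (f := fun _ => (1 : ℝ)) ?_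
    filter_upwards [Iio_mem_nhds hgt] with t ht
    exact (if_pos ht.le).symm

lemma thresholdRule_sub_mul_nonneg {δ : α → ℝ} {x : α} (hδ : δ x ∈ Icc (0 : ℝ) 1) :
    0 ≤ (thresholdRule q s x - δ x) * (q x - s) := by
  unfold thresholdRule
  split_ifs with h
  · exact mul_nonneg (by linarith [hδ.2]) (by linarith)
  · nlinarith [hδ.1]

lemma setIntegral_thresholdRule [MeasurableSpace α] {μ : Measure α} (hq : Measurable q)
    (A : Set α) : ∫ x in A, thresholdRule q s x ∂μ = (μ ({x | s ≤ q x} ∩ A)).toReal := by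
  have hS : MeasurableSet {x | s ≤ q x} := measurableSet_le measurable_const hq
  have : thresholdRule q s = {x | s ≤ q x}.indicator 1 := by
    ext x; simp [thresholdRule, indicator_apply]
  rw [this, integral_indicator_one hS, measureReal_restrict_apply hS, measureReal_def]

end ThresholdRule

section Integrals

variable {Ω : Type*} [MeasurableSpace Ω] {ν : Measure Ω} {q δ : Ω → ℝ}

lemma integrable_of_mem_Icc [IsFiniteMeasure ν] {f : Ω → ℝ} (hf : Measurable f)
    (hf01 : ∀ ω, f ω ∈ Icc (0 : ℝ) 1) : Integrable f ν :=
  .of_bound hf.aestronglyMeasurable 1 (ae_of_all _ fun ω => norm_le_one_of_mem_Icc (hf01 ω))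

lemma integral_mul_sub_const {f : Ω → ℝ} (hf : Integrable f ν)
    (hfq : Integrable (fun ω => f ω * q ω) ν) (t : ℝ) :
    ∫ ω, f ω * (q ω - t) ∂ν = ∫ ω, f ω * q ω ∂ν - t * ∫ ω, f ω ∂ν := by
  simp_rw [mul_sub]
  rw [integral_sub hfq (hf.mul_const t), integral_mul_const, mul_comm]

lemma continuous_integral_thresholdRule_mul (hq : Measurable q)
    (hq_ne : ∀ s, ∀ᵐ ω ∂ν, q ω ≠ s) {w : Ω → ℝ} (hw : Integrable w ν) :
    Continuous fun s => ∫ ω, thresholdRule q s ω * w ω ∂ν := by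
  refine continuous_iff_continuousAt.2 fun s =>
    continuousAt_of_dominated (bound := fun ω => ‖w ω‖) ?_ ?_ hw.norm ?_
  · exact .of_forall fun t =>
      ((measurable_thresholdRule hq t).aestronglyMeasurable.mul hw.aestronglyMeasurable)
  · refine .of_forall fun t => .of_forall fun ω => ?_
    rw [norm_mul]
    exact mul_le_of_le_one_left (norm_nonneg _) (norm_le_one_of_mem_Icc (thresholdRule_mem_Icc ω))
  · filter_upwards [hq_ne s] with ω hω
    exact (continuousAt_thresholdRule hω).mul continuousAt_const

end Integrals

section Improvement

variable {Ω : Type*} [MeasurableSpace Ω] {ν : Measure Ω} [IsFiniteMeasure ν] {q δ : Ω → ℝ}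

lemma integrable_mul_one_sub_of_mem_Icc (hq : Measurable q) (hq01 : ∀ ω, q ω ∈ Icc (0 : ℝ) 1)
    (hδ : Measurable δ) (hδ01 : ∀ ω, δ ω ∈ Icc (0 : ℝ) 1) :
    Integrable (fun ω => δ ω * (1 - q ω)) ν :=
  integrable_of_mem_Icc (hδ.mul (measurable_const.sub hq)) fun ω =>
    unitInterval.mul_mem (hδ01 ω) (Icc.mem_iff_one_sub_mem.1 (hq01 ω))

lemma exists_integral_thresholdRule_mul_eq (hq : Measurable q) (hq01 : ∀ ω, q ω ∈ Icc (0 : ℝ) 1)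
    (hq_ne : ∀ s, ∀ᵐ ω ∂ν, q ω ≠ s) (hδ : Measurable δ) (hδ01 : ∀ ω, δ ω ∈ Icc (0 : ℝ) 1) :
    ∃ s ∈ Icc (0 : ℝ) 1,
      ∫ ω, thresholdRule q s ω * (1 - q ω) ∂ν = ∫ ω, δ ω * (1 - q ω) ∂ν := by
  have hF1 : ∫ ω, thresholdRule q 1 ω * (1 - q ω) ∂ν = 0 := by
    refine integral_eq_zero_of_ae (ae_of_all _ fun ω => ?_)
    by_cases h : 1 ≤ q ω
    · simp [le_antisymm (hq01 ω).2 h]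
    · simp [thresholdRule, h]
  have hF0 : ∫ ω, δ ω * (1 - q ω) ∂ν ≤ ∫ ω, thresholdRule q 0 ω * (1 - q ω) ∂ν := by
    refine integral_mono (integrable_mul_one_sub_of_mem_Icc hq hq01 hδ hδ01)
      (integrable_mul_one_sub_of_mem_Icc hq hq01 (measurable_thresholdRule hq 0)
        thresholdRule_mem_Icc) fun ω => ?_
    simp only [thresholdRule, if_pos (hq01 ω).1]
    exact mul_le_mul_of_nonneg_right (hδ01 ω).2 (Icc.mem_iff_one_sub_mem.1 (hq01 ω)).1
  have hT : 0 ≤ ∫ ω, δ ω * (1 - q ω) ∂ν := integral_nonneg fun ω =>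
    (unitInterval.mul_mem (hδ01 ω) (Icc.mem_iff_one_sub_mem.1 (hq01 ω))).1
  exact intermediate_value_Icc' zero_le_one
    (continuous_integral_thresholdRule_mul hq hq_ne
      (integrable_of_mem_Icc (measurable_const.sub hq)
        fun ω => Icc.mem_iff_one_sub_mem.1 (hq01 ω))).continuousOn
    ⟨hF1 ▸ hT, hF0⟩

lemma integral_thresholdRule_sub_mul_pos (hq : Measurable q) (hq01 : ∀ ω, q ω ∈ Icc (0 : ℝ) 1)
    (hδ : Measurable δ) (hδ01 : ∀ ω, δ ω ∈ Icc (0 : ℝ) 1) {s c : ℝ} (hs : s ≤ 1) (hc : c < 1)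
    (hs_ne : ∀ᵐ ω ∂ν, q ω ≠ s) (hδ_ne : ¬ δ =ᵐ[ν] thresholdRule q s)
    (hfp : ∫ ω, thresholdRule q s ω * (1 - q ω) ∂ν = ∫ ω, δ ω * (1 - q ω) ∂ν) :
    0 < ∫ ω, (thresholdRule q s ω - δ ω) * (q ω - c) ∂ν := by
  set h : Ω → ℝ := fun ω => thresholdRule q s ω - δ ω
  have hh_meas : Measurable h := (measurable_thresholdRule hq s).sub hδ
  have hh_bdd : ∀ ω, ‖h ω‖ ≤ 1 := fun ω => by
    have := thresholdRule_mem_Icc (q := q) (s := s) ω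
    rw [Real.norm_eq_abs, abs_le]
    constructor <;> linarith [(hδ01 ω).1, (hδ01 ω).2, this.1, this.2]
  have hh : Integrable h ν := .of_bound hh_meas.aestronglyMeasurable 1 (ae_of_all _ hh_bdd)
  have hhq : Integrable (fun ω => h ω * q ω) ν :=
    (integrable_of_mem_Icc hq hq01).bdd_mul hh_meas.aestronglyMeasurable (ae_of_all _ hh_bdd)
  have hK : 0 < ∫ ω, h ω * (q ω - s) ∂ν := by
    have hK_nonneg : ∀ ω, 0 ≤ h ω * (q ω - s) := fun ω => thresholdRule_sub_mul_nonneg (hδ01 ω)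
    have hK_int : Integrable (fun ω => h ω * (q ω - s)) ν := by
      simp only [mul_sub]
      exact hhq.sub (hh.mul_const s)
    refine (integral_nonneg hK_nonneg).lt_of_ne fun hK0 => hδ_ne ?_
    filter_upwards [(integral_eq_zero_iff_of_nonneg hK_nonneg hK_int).1 hK0.symm, hs_ne]
      with ω hω hωs
    rcases mul_eq_zero.1 hω with h0 | h0
    · exact (sub_eq_zero.1 h0).symm
    · exact absurd (sub_eq_zero.1 h0) hωs
  have hE : ∫ ω, h ω * (1 - q ω) ∂ν = 0 := by
    simp only [h, sub_mul]
    rw [integral_sub (integrable_mul_one_sub_of_mem_Icc hq hq01 (measurable_thresholdRule hq s)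
      thresholdRule_mem_Icc) (integrable_mul_one_sub_of_mem_Icc hq hq01 hδ hδ01), hfp, sub_self]
  simp only [mul_one_sub] at hE
  rw [integral_sub hh hhq] at hE
  rw [integral_mul_sub_const hh hhq] at hK ⊢
  nlinarith

end Improvement

lemma PosDensity01.nullSingletonClass {ν : Measure ℝ} (h : PosDensity01 ν) :
    NullSingletonClass ν := by
  obtain ⟨φ, rfl, -⟩ := h
  infer_instance

lemma ae_restrict_ne_of_map_cond {Ω : Type*} [MeasurableSpace Ω]
    {μ : Measure Ω} {A : Set Ω} (hA : μ A ≠ ⊤) {q : Ω → ℝ} (hq : Measurable q)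
    [NullSingletonClass ((μ[|A]).map q)] (s : ℝ) : ∀ᵐ ω ∂μ.restrict A, q ω ≠ s :=
  (Measure.absolutelyContinuous_smul (ENNReal.inv_ne_zero.2 hA)).ae_le
    ((ae_map_iff hq.aemeasurable (measurableSet_singleton s).compl).1
      (Measure.ae_ne ((μ[|A]).map q) s))

section Utility

variable {Ω 𝒳 : Type*} [MeasurableSpace Ω] [MeasurableSpace 𝒳] {μ : Measure Ω}
  {X : Ω → 𝒳} {Y : Ω → ℝ} {p : 𝒳 → ℝ}

lemma integral_sub_eq_setIntegral_sub {A : Set Ω} {f₁ f₂ : Ω → ℝ} (h₁ : Integrable f₁ μ)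
    (h₂ : Integrable f₂ μ) (h : ∀ ω ∉ A, f₁ ω = f₂ ω) :
    ∫ ω, f₁ ω ∂μ - ∫ ω, f₂ ω ∂μ = ∫ ω in A, f₁ ω - f₂ ω ∂μ := by
  rw [← integral_sub h₁ h₂,
    setIntegral_eq_integral_of_forall_compl_eq_zero fun ω hω => sub_eq_zero.2 (h ω hω)]

variable [IsFiniteMeasure μ]

lemma utility_eq_integral_mul_sub (hX : Measurable X) (hp : Measurable p)
    (hp01 : ∀ x, p x ∈ Icc (0:ℝ) 1) {f : 𝒳 → ℝ} (hf : Measurable f)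
    (hf01 : ∀ x, f x ∈ Icc (0:ℝ) 1)
    (hrisk : ∫ ω, Y ω * f (X ω) ∂μ = ∫ ω, p (X ω) * f (X ω) ∂μ) (c : ℝ) :
    ∫ ω, Y ω * f (X ω) ∂μ - c * ∫ ω, f (X ω) ∂μ = ∫ ω, f (X ω) * (p (X ω) - c) ∂μ := by
  have hfX : Integrable (fun ω => f (X ω)) μ := integrable_of_mem_Icc (hf.comp hX) (hf01 <| X ·)
  have hfpX : Integrable (fun ω => f (X ω) * p (X ω)) μ :=
    integrable_of_mem_Icc ((hf.mul hp).comp hX) fun ω => unitInterval.mul_mem (hf01 _) (hp01 _)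
  simp only [hrisk, mul_comm (p _), integral_mul_sub_const hfX hfpX]

lemma integrable_comp_mul_sub (hX : Measurable X) (hp : Measurable p)
    (hp01 : ∀ x, p x ∈ Icc (0:ℝ) 1) {f : 𝒳 → ℝ} (hf : Measurable f)
    (hf01 : ∀ x, f x ∈ Icc (0:ℝ) 1) (c : ℝ) :
    Integrable (fun ω => f (X ω) * (p (X ω) - c)) μ :=
  (integrable_of_mem_Icc (hf.comp hX) (hf01 <| X ·)).mul_bdd
    ((hp.comp hX).sub measurable_const).aestronglyMeasurable (ae_of_all _ fun _ =>
      (norm_sub_le _ _).trans (add_le_add_left (norm_le_one_of_mem_Icc (hp01 _)) ‖c‖))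

lemma utility_piecewise_sub (hX : Measurable X) (hp : Measurable p)
    (hp01 : ∀ x, p x ∈ Icc (0:ℝ) 1)
    (hrisk : ∀ f : 𝒳 → ℝ, Measurable f → (∃ C, ∀ x, |f x| ≤ C) →
      ∫ ω, Y ω * f (X ω) ∂μ = ∫ ω, p (X ω) * f (X ω) ∂μ)
    {S : Set 𝒳} [∀ x, Decidable (x ∈ S)] (hS : MeasurableSet S) {d₀ d : 𝒳 → ℝ}
    (hd₀ : Measurable d₀) (hd₀01 : ∀ x, d₀ x ∈ Icc (0:ℝ) 1)
    (hd : Measurable d) (hd01 : ∀ x, d x ∈ Icc (0:ℝ) 1) (c : ℝ) :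
    (∫ ω, Y ω * S.piecewise d₀ d (X ω) ∂μ - c * ∫ ω, S.piecewise d₀ d (X ω) ∂μ)
      - (∫ ω, Y ω * d (X ω) ∂μ - c * ∫ ω, d (X ω) ∂μ)
      = ∫ ω in X ⁻¹' S, (d₀ (X ω) - d (X ω)) * (p (X ω) - c) ∂μ := by
  have hbdd {f : 𝒳 → ℝ} (hf01 : ∀ x, f x ∈ Icc (0:ℝ) 1) : ∃ C, ∀ x, |f x| ≤ C :=
    ⟨1, fun x => norm_le_one_of_mem_Icc (hf01 x)⟩
  have hd' : Measurable (S.piecewise d₀ d) := hd₀.piecewise hS hd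
  have hd'01 := piecewise_apply_mem S hd₀01 hd01
  rw [utility_eq_integral_mul_sub hX hp hp01 hd' hd'01 (hrisk _ hd' (hbdd hd'01)),
    utility_eq_integral_mul_sub hX hp hp01 hd hd01 (hrisk d hd (hbdd hd01)),
    integral_sub_eq_setIntegral_sub (A := X ⁻¹' S) (integrable_comp_mul_sub hX hp hp01 hd' hd'01 c)
      (integrable_comp_mul_sub hX hp hp01 hd hd01 c)
      fun ω hω => by rw [S.piecewise_eqOn_compl d₀ d hω]]
  exact setIntegral_congr_fun (hS.preimage hX) fun ω hω => by
    rw [S.piecewise_eqOn d₀ d hω, sub_mul]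

end Utility

lemma setIntegral_piecewise_mul_eq_of_fiber {Ω 𝒳 G : Type*} [MeasurableSpace Ω]
    [MeasurableSpace 𝒳] [MeasurableSpace G] [MeasurableSingletonClass G] {μ : Measure Ω}
    {X : Ω → 𝒳} (hX : Measurable X) {g : 𝒳 → G} (hg : Measurable g) {a : G}
    [∀ x, Decidable (x ∈ g ⁻¹' {a})] {d₀ d : 𝒳 → ℝ} {w : Ω → ℝ}
    (ha : ∫ ω in {ω | g (X ω) = a}, d₀ (X ω) * w ω ∂μ
      = ∫ ω in {ω | g (X ω) = a}, d (X ω) * w ω ∂μ) (b : G) :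
    ∫ ω in {ω | g (X ω) = b}, (g ⁻¹' {a}).piecewise d₀ d (X ω) * w ω ∂μ
      = ∫ ω in {ω | g (X ω) = b}, d (X ω) * w ω ∂μ := by
  have hb : MeasurableSet {ω | g (X ω) = b} := hg.comp hX (measurableSet_singleton b)
  by_cases hab : b = a
  · subst hab
    rw [← ha]
    exact setIntegral_congr_fun hb fun ω hω => by
      rw [(g ⁻¹' {b}).piecewise_eqOn d₀ d hω]
  · exact setIntegral_congr_fun hb fun ω hω => by
      rw [(g ⁻¹' {a}).piecewise_eqOn_compl d₀ d fun h => hab (hω.symm.trans h)]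

theorem stmt_14_general
    {Ω 𝒳 G : Type*} [MeasurableSpace Ω] [MeasurableSpace 𝒳]
    [MeasurableSpace G] [MeasurableSingletonClass G]
    (μ : Measure Ω) [IsProbabilityMeasure μ]
    (X : Ω → 𝒳) (hX : Measurable X)
    (Y : Ω → ℝ)
    (p : 𝒳 → ℝ) (hp : Measurable p) (hp01 : ∀ x, p x ∈ Icc (0:ℝ) 1)
    (hrisk : ∀ f : 𝒳 → ℝ, Measurable f → (∃ C, ∀ x, |f x| ≤ C) →
      ∫ ω, Y ω * f (X ω) ∂μ = ∫ ω, p (X ω) * f (X ω) ∂μ)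
    (g : 𝒳 → G) (hg : Measurable g)
    (hdens : ∀ a : G,
      PosDensity01 (Measure.map (fun ω => p (X ω))
        (ProbabilityTheory.cond μ {ω | g (X ω) = a})))
    (c : ℝ) (hc1 : c < 1)
    (d : 𝒳 → ℝ) (hd : Measurable d) (hd01 : ∀ x, d x ∈ Icc (0:ℝ) 1)
    (hnot : ∃ a : G, ∀ t ∈ Icc (0:ℝ) 1,
      ((μ ({ω | t ≤ p (X ω)} ∩ {ω | g (X ω) = a})).toReal
          / (μ {ω | g (X ω) = a}).toReal
        = (∫ ω in {ω | g (X ω) = a}, d (X ω) ∂μ) / (μ {ω | g (X ω) = a}).toReal) →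
      ¬ (∀ᵐ ω ∂μ, g (X ω) = a → d (X ω) = (if t ≤ p (X ω) then (1:ℝ) else 0))) :
    ∃ d' : 𝒳 → ℝ, Measurable d' ∧ (∀ x, d' x ∈ Icc (0:ℝ) 1) ∧
      (∀ b : G,
        ∫ ω in {ω | g (X ω) = b}, d' (X ω) * (1 - p (X ω)) ∂μ
          = ∫ ω in {ω | g (X ω) = b}, d (X ω) * (1 - p (X ω)) ∂μ) ∧
      (∫ ω, Y ω * d (X ω) ∂μ) - c * ∫ ω, d (X ω) ∂μ
        < (∫ ω, Y ω * d' (X ω) ∂μ) - c * ∫ ω, d' (X ω) ∂μ := by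
  classical
  obtain ⟨a, ha⟩ := hnot
  set A : Set Ω := {ω | g (X ω) = a}
  have hS : MeasurableSet (g ⁻¹' {a}) := hg (measurableSet_singleton a)
  have hpX : Measurable fun ω => p (X ω) := hp.comp hX
  have := (hdens a).nullSingletonClass
  have hne := ae_restrict_ne_of_map_cond (measure_ne_top μ A) hpX
  obtain ⟨s, hs, hfp⟩ := exists_integral_thresholdRule_mul_eq (δ := fun ω => d (X ω)) hpX
    (hp01 <| X ·) hne (hd.comp hX) (hd01 <| X ·)
  have hd_ne : ¬ (fun ω => d (X ω)) =ᵐ[μ.restrict A] thresholdRule (fun ω => p (X ω)) s :=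
    fun hae => ha s hs (by rw [integral_congr_ae hae, setIntegral_thresholdRule hpX])
      ((ae_restrict_iff' (hS.preimage hX)).1 hae)
  refine ⟨(g ⁻¹' {a}).piecewise (thresholdRule p s) d,
    (measurable_thresholdRule hp s).piecewise hS hd,
    piecewise_apply_mem _ thresholdRule_mem_Icc hd01,
    setIntegral_piecewise_mul_eq_of_fiber hX hg hfp, ?_⟩
  rw [← sub_pos, utility_piecewise_sub hX hp hp01 hrisk hS (measurable_thresholdRule hp s)
    thresholdRule_mem_Icc hd hd01]
  exact integral_thresholdRule_sub_mul_pos hpX (hp01 <| X ·) (hd.comp hX) (hd01 <| X ·) hs.2 hc1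
    (hne s) hd_ne hfp

/-- if a decision rule `d` fails, on some group `a*`, to agree a.s. with
the threshold rule `1{p(X) ≥ t}` for the unique `t` matching `d`'s detention rate on
`{g(X) = a*}`, then there is a decision rule `d'` with the same group-wise false positive
quantities `E[d(X)(1 − p(X))·1{g(X) = b}]` and strictly higher immediate utility. -/
theorem stmt_14
    {Ω 𝒳 G : Type*} [MeasurableSpace Ω] [MeasurableSpace 𝒳]
    [Fintype G] [MeasurableSpace G] [MeasurableSingletonClass G]
    (μ : Measure Ω) [IsProbabilityMeasure μ]
    (X : Ω → 𝒳) (hX : Measurable X)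
    (Y : Ω → ℝ) (hY : Measurable Y) (hY01 : ∀ ω, Y ω = 0 ∨ Y ω = 1)
    (p : 𝒳 → ℝ) (hp : Measurable p) (hp01 : ∀ x, p x ∈ Icc (0:ℝ) 1)
    (hrisk : ∀ f : 𝒳 → ℝ, Measurable f → (∃ C, ∀ x, |f x| ≤ C) →
      ∫ ω, Y ω * f (X ω) ∂μ = ∫ ω, p (X ω) * f (X ω) ∂μ)
    (g : 𝒳 → G) (hg : Measurable g)
    (hgpos : ∀ a : G, 0 < μ {ω | g (X ω) = a})
    (hdens : ∀ a : G,
      PosDensity01 (Measure.map (fun ω => p (X ω))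
        (ProbabilityTheory.cond μ {ω | g (X ω) = a})))
    (c : ℝ) (hc0 : 0 < c) (hc1 : c < 1)
    (d : 𝒳 → ℝ) (hd : Measurable d) (hd01 : ∀ x, d x ∈ Icc (0:ℝ) 1)
    (hnot : ∃ a : G, ∀ t ∈ Icc (0:ℝ) 1,
      ((μ ({ω | t ≤ p (X ω)} ∩ {ω | g (X ω) = a})).toReal
          / (μ {ω | g (X ω) = a}).toReal
        = (∫ ω in {ω | g (X ω) = a}, d (X ω) ∂μ) / (μ {ω | g (X ω) = a}).toReal) →
      ¬ (∀ᵐ ω ∂μ, g (X ω) = a → d (X ω) = (if t ≤ p (X ω) then (1:ℝ) else 0))) :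
    ∃ d' : 𝒳 → ℝ, Measurable d' ∧ (∀ x, d' x ∈ Icc (0:ℝ) 1) ∧
      (∀ b : G,
        ∫ ω in {ω | g (X ω) = b}, d' (X ω) * (1 - p (X ω)) ∂μ
          = ∫ ω in {ω | g (X ω) = b}, d (X ω) * (1 - p (X ω)) ∂μ) ∧
      (∫ ω, Y ω * d (X ω) ∂μ) - c * ∫ ω, d (X ω) ∂μ
        < (∫ ω, Y ω * d' (X ω) ∂μ) - c * ∫ ω, d' (X ω) ∂μ :=
  stmt_14_general μ X hX Y p hp hp01 hrisk g hg hdens c hc1 d hd hd01 hnot
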